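/- arXiv:2110.09652 — 3 statements merged into one kernel-verified Lean document; each statement's English description precedes it below -/
import Mathlib

section
/- The double integral over the unit square of 1/((1+u)(1+v)(1+uv)) with respect to u and v equals π²/24. -/
/-!
Integrating in `v` by partial fractions gives `(log 2 - log (1 + u)) / (1 - u ^ 2)`, and the
substitution `t = (1 - u) / (1 + u)` turns the remaining integral into
`(1 / 2) ∫₀¹ log (1 + t) / t dt`. Expanding `log (1 + t) / t = ∑ (-t) ^ n / (n + 1)` and
integrating termwise gives `∑ (-1) ^ n / (n + 1) ^ 2 = π ^ 2 / 12`, the value at `x = 1 / 2` of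
the Fourier series of the Bernoulli polynomial `B₂`.
-/

open Real Set MeasureTheory

theorem hasSum_neg_one_pow_div_succ_sq :
    HasSum (fun n : ℕ => (-1) ^ n / ((n : ℝ) + 1) ^ 2) (π ^ 2 / 12) := by
  have h := hasSum_one_div_nat_pow_mul_cos one_ne_zero (x := 1 / 2) ⟨by norm_num, by norm_num⟩
  have hcos (n : ℕ) : cos (2 * π * n * (1 / 2)) = (-1) ^ n := by
    rw [← cos_nat_mul_pi]; ring_nf
  simp only [mul_one, hcos, ← bernoulliFun.eq_1, bernoulliFun_two] at h
  rw [← hasSum_nat_add_iff' 1] at h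
  convert! h.neg using 1
  · ext n
    push_cast
    ring
  · norm_num [Nat.factorial]
    ring

theorem hasSum_log_one_add_div_self {t : ℝ} (ht : |t| < 1) (ht0 : t ≠ 0) :
    HasSum (fun n : ℕ => (-t) ^ n / (n + 1)) (log (1 + t) / t) := by
  have h := (hasSum_pow_div_log_of_abs_lt_one (x := -t) (by rwa [abs_neg])).div_const (-t)
  rw [sub_neg_eq_add, neg_div_neg_eq] at h
  convert! h using 2 with n
  rw [pow_succ]
  field_simp

theorem integral_neg_pow_div_succ (n : ℕ) :
    ∫ t in (0 : ℝ)..1, (-t) ^ n / (n + 1) = (-1) ^ n / ((n : ℝ) + 1) ^ 2 := by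
  rw [intervalIntegral.integral_div, intervalIntegral.integral_comp_neg (fun t => t ^ n),
    integral_pow]
  field_simp
  ring

theorem integral_log_one_add_div_self : ∫ t in (0 : ℝ)..1, log (1 + t) / t = π ^ 2 / 12 := by
  set F : ℕ → ℝ → ℝ := fun n t => (-t) ^ n / (n + 1)
  have hF_norm (n : ℕ) : ∫ t in Ioo (0 : ℝ) 1, ‖F n t‖ = 1 / ((n : ℝ) + 1) ^ 2 := by
    rw [setIntegral_congr_fun measurableSet_Ioo (g := fun t : ℝ => t ^ n / (n + 1)),
      ← integral_Ioc_eq_integral_Ioo, ← intervalIntegral.integral_of_le zero_le_one]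
    · rw [intervalIntegral.integral_div, integral_pow]
      norm_num
      field_simp
    · intro t ht
      simp [F, abs_of_pos ht.1, abs_of_pos (n.cast_add_one_pos (α := ℝ))]
  have hF_sum : Summable fun n => ∫ t in Ioo (0 : ℝ) 1, ‖F n t‖ := by
    simp_rw [hF_norm]
    exact_mod_cast (summable_nat_add_iff 1).mpr (Real.summable_one_div_nat_pow.mpr one_lt_two)
  have hF_integral := hasSum_integral_of_summable_integral_norm
    (fun n => (by fun_prop : Continuous (F n)).integrableOn_Icc.mono_set Ioo_subset_Icc_self) hF_sum
  rw [intervalIntegral.integral_of_le zero_le_one, integral_Ioc_eq_integral_Ioo,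
    setIntegral_congr_fun measurableSet_Ioo fun t ht =>
      (hasSum_log_one_add_div_self (abs_lt.mpr ⟨by linarith [ht.1], ht.2⟩) ht.1.ne').tsum_eq.symm]
  refine HasSum.unique ?_ hasSum_neg_one_pow_div_succ_sq
  simpa only [← integral_Ioc_eq_integral_Ioo, ← intervalIntegral.integral_of_le zero_le_one, F,
    integral_neg_pow_div_succ] using hF_integral

theorem integral_one_div_one_add_mul_one_add_mul {u : ℝ} (hu : -1 < u) (hu1 : u ≠ 1) :
    ∫ v in (0 : ℝ)..1, 1 / ((1 + u) * (1 + v) * (1 + u * v))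
      = (log 2 - log (1 + u)) / ((1 + u) * (1 - u)) := by
  have hu₀ : 0 < 1 + u := by linarith
  have hu₁ : 1 - u ≠ 0 := sub_ne_zero.mpr hu1.symm
  have hpos {v : ℝ} (hv : v ∈ uIcc 0 1) : 0 < 1 + v ∧ 0 < 1 + u * v := by
    rw [uIcc_of_le zero_le_one] at hv
    refine ⟨by linarith [hv.1], ?_⟩
    -- `1 + u * v = (1 - v) + v * (1 + u)` is a convex combination of `1` and `1 + u`
    rcases hv.2.eq_or_lt with rfl | hv1
    · simpa using hu₀
    · nlinarith [mul_nonneg hv.1 hu₀.le]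
  have hderiv (v : ℝ) (hv : v ∈ uIcc 0 1) :
      HasDerivAt (fun v => (log (1 + v) - log (1 + u * v)) / ((1 + u) * (1 - u)))
        (1 / ((1 + u) * (1 + v) * (1 + u * v))) v := by
    obtain ⟨h1, h2⟩ := hpos hv
    convert! ((((hasDerivAt_id v).const_add 1).log h1.ne').sub
      ((((hasDerivAt_id v).const_mul u).const_add 1).log h2.ne')).div_const _ using 1
    simp only [id]
    field_simp
    ring
  have hcont : ContinuousOn (fun v => 1 / ((1 + u) * (1 + v) * (1 + u * v))) (uIcc 0 1) := by
    refine continuousOn_const.div (by fun_prop) fun v hv => ?_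
    obtain ⟨h1, h2⟩ := hpos hv
    positivity
  rw [intervalIntegral.integral_eq_sub_of_hasDerivAt hderiv hcont.intervalIntegrable]
  norm_num

theorem integral_log_two_sub_log_div :
    ∫ u in (0 : ℝ)..1, (log 2 - log (1 + u)) / ((1 + u) * (1 - u))
      = (∫ t in (0 : ℝ)..1, log (1 + t) / t) / 2 := by
  -- `dslope` extends `log (1 + t) / t` continuously by `1` at `t = 0`, as the change of variables
  -- requires a continuous integrand.
  set g := dslope (fun t => log (1 + t)) 0
  have hg_eq {t : ℝ} (ht : t ≠ 0) : g t = log (1 + t) / t := by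
    simp [g, dslope_of_ne _ ht, slope_def_field, div_eq_inv_mul]
  have hg_cont : ContinuousOn g (Ioi (-1)) := by
    refine (continuousOn_dslope (Ioi_mem_nhds (by norm_num))).mpr ⟨?_, ?_⟩
    · exact ContinuousOn.log (by fun_prop) fun t ht => by linarith [mem_Ioi.mp ht]
    · exact ((hasDerivAt_id 0).const_add 1).log (by norm_num) |>.differentiableAt
  have hφ (u : ℝ) (hu : u ∈ uIcc 0 1) :
      HasDerivAt (fun u => (1 - u) / (1 + u)) (-2 / (1 + u) ^ 2) u := by
    rw [uIcc_of_le zero_le_one] at hu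
    have : 1 + u ≠ 0 := by linarith [hu.1]
    convert! ((hasDerivAt_id u).const_sub 1).div ((hasDerivAt_id u).const_add 1) this using 1
    simp only [id]
    field_simp
    ring
  have hφ'_cont : ContinuousOn (fun u : ℝ => -2 / (1 + u) ^ 2) (uIcc 0 1) := by
    refine continuousOn_const.div (by fun_prop) fun u hu => ?_
    rw [uIcc_of_le zero_le_one] at hu
    have : 0 < 1 + u := by linarith [hu.1]
    positivity
  have hφ_image : (fun u : ℝ => (1 - u) / (1 + u)) '' uIcc 0 1 ⊆ Ioi (-1) := by
    rintro _ ⟨u, hu, rfl⟩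
    rw [uIcc_of_le zero_le_one] at hu
    have : 0 < 1 + u := by linarith [hu.1]
    exact lt_of_lt_of_le (by norm_num) (div_nonneg (by linarith [hu.2]) this.le)
  have hsub := intervalIntegral.integral_comp_mul_deriv' hφ hφ'_cont (hg_cont.mono hφ_image)
  calc ∫ u in (0 : ℝ)..1, (log 2 - log (1 + u)) / ((1 + u) * (1 - u))
      = ∫ u in (0 : ℝ)..1,
          -(1 / 2) * ((g ∘ fun u => (1 - u) / (1 + u)) u * (-2 / (1 + u) ^ 2)) := by
        refine intervalIntegral.integral_congr_Ioo_of_le zero_le_one fun u hu => ?_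
        have h1 : 1 + u ≠ 0 := by linarith [hu.1]
        have h2 : 1 - u ≠ 0 := by linarith [hu.2]
        have h3 : 1 + (1 - u) / (1 + u) = 2 / (1 + u) := by field_simp; ring
        simp only [Function.comp, hg_eq (div_ne_zero h2 h1), h3, log_div two_ne_zero h1]
        field_simp
    _ = (∫ t in (0 : ℝ)..1, g t) / 2 := by
        rw [intervalIntegral.integral_const_mul, hsub, intervalIntegral.integral_symm]
        norm_num
        ring
    _ = (∫ t in (0 : ℝ)..1, log (1 + t) / t) / 2 := by
        rw [intervalIntegral.integral_congr_Ioo_of_le zero_le_one fun t ht => hg_eq ht.1.ne']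

theorem double_integral_unit_square :
    ∫ u in (0:ℝ)..1, ∫ v in (0:ℝ)..1, 1 / ((1 + u) * (1 + v) * (1 + u * v))
      = Real.pi ^ 2 / 24 := by
  calc _ = ∫ u in (0 : ℝ)..1, (log 2 - log (1 + u)) / ((1 + u) * (1 - u)) :=
        intervalIntegral.integral_congr_Ioo_of_le zero_le_one fun u hu =>
          integral_one_div_one_add_mul_one_add_mul (by linarith [hu.1]) hu.2.ne
    _ = π ^ 2 / 24 := by
        rw [integral_log_two_sub_log_div, integral_log_one_add_div_self]
        ring
end

section
/- For every integer k ≥ 1 and positive real numbers m ranging over [1,k], the finite sum ∑_{1 ≤ m₁,m₂,m₃ ≤ k} 1/((m₁+m₂)(m₂+m₃)(m₃+m₁)) equals (1/2)·(∑_{1≤m≤k} 1/m)³ − (3/2)·∑_{1 ≤ m₁,m₂,m₃ ≤ k} 1/(m₂(m₁+m₂)(m₂+m₃)). -/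
/-!
Clearing denominators, the identity `2abc = (a+b)(b+c)(c+a) - ab(a+b) - bc(b+c) - ca(c+a)` gives
`2 / ((a+b)(b+c)(c+a)) = 1/(abc) - 1/(b(a+b)(b+c)) - 1/(c(b+c)(c+a)) - 1/(a(c+a)(a+b))`.
Summing over all triples, the first term gives the cube of the harmonic sum, and the last three
terms are cyclic rotations of one another, so their triple sums coincide.
-/

open Finset

namespace Finset

variable {ι : Type*}

theorem sum_sum_sum_rotate {M : Type*} [AddCommMonoid M] (s : Finset ι) (g : ι → ι → ι → M) :
    ∑ a ∈ s, ∑ b ∈ s, ∑ c ∈ s, g b c a = ∑ a ∈ s, ∑ b ∈ s, ∑ c ∈ s, g a b c := by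
  rw [sum_comm]
  exact sum_congr rfl fun _ _ => sum_comm

theorem sum_pow_three {R : Type*} [Semiring R] (s : Finset ι) (f : ι → R) :
    (∑ i ∈ s, f i) ^ 3 = ∑ a ∈ s, ∑ b ∈ s, ∑ c ∈ s, f a * f b * f c := by
  rw [pow_three, sum_mul]
  refine sum_congr rfl fun a _ => ?_
  rw [sum_mul_sum, mul_sum]
  simp only [mul_sum, mul_assoc]

end Finset

section

variable {K : Type*} [Field K]

theorem two_div_mul_add_mul_add {a b c : K} (ha : a ≠ 0) (hb : b ≠ 0) (hc : c ≠ 0)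
    (hab : a + b ≠ 0) (hbc : b + c ≠ 0) (hca : c + a ≠ 0) :
    2 / ((a + b) * (b + c) * (c + a))
      = 1 / a * (1 / b) * (1 / c) - 1 / (b * (a + b) * (b + c))
        - 1 / (c * (b + c) * (c + a)) - 1 / (a * (c + a) * (a + b)) := by
  field_simp
  ring

theorem two_mul_sum_one_div_mul_add_mul_add {ι : Type*} (s : Finset ι) (x : ι → K)
    (hx : ∀ i ∈ s, x i ≠ 0) (hxx : ∀ i ∈ s, ∀ j ∈ s, x i + x j ≠ 0) :
    2 * ∑ a ∈ s, ∑ b ∈ s, ∑ c ∈ s, 1 / ((x a + x b) * (x b + x c) * (x c + x a))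
      = (∑ i ∈ s, 1 / x i) ^ 3
        - 3 * ∑ a ∈ s, ∑ b ∈ s, ∑ c ∈ s, 1 / (x b * (x a + x b) * (x b + x c)) := by
  set T := ∑ a ∈ s, ∑ b ∈ s, ∑ c ∈ s, 1 / (x b * (x a + x b) * (x b + x c))
  have hpointwise : ∑ a ∈ s, ∑ b ∈ s, ∑ c ∈ s, 2 / ((x a + x b) * (x b + x c) * (x c + x a))
      = ∑ a ∈ s, ∑ b ∈ s, ∑ c ∈ s, (1 / x a * (1 / x b) * (1 / x c)
          - 1 / (x b * (x a + x b) * (x b + x c)) - 1 / (x c * (x b + x c) * (x c + x a))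
          - 1 / (x a * (x c + x a) * (x a + x b))) :=
    sum_congr rfl fun a ha => sum_congr rfl fun b hb => sum_congr rfl fun c hc =>
      two_div_mul_add_mul_add (hx a ha) (hx b hb) (hx c hc)
        (hxx a ha b hb) (hxx b hb c hc) (hxx c hc a ha)
  have hrot₁ : ∑ a ∈ s, ∑ b ∈ s, ∑ c ∈ s, 1 / (x c * (x b + x c) * (x c + x a)) = T :=
    sum_sum_sum_rotate s fun a b c => 1 / (x b * (x a + x b) * (x b + x c))
  have hrot₂ : ∑ a ∈ s, ∑ b ∈ s, ∑ c ∈ s, 1 / (x a * (x c + x a) * (x a + x b)) = T :=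
    (sum_sum_sum_rotate s fun a b c => 1 / (x a * (x c + x a) * (x a + x b))).symm
  have htwo : 2 * ∑ a ∈ s, ∑ b ∈ s, ∑ c ∈ s, 1 / ((x a + x b) * (x b + x c) * (x c + x a))
      = ∑ a ∈ s, ∑ b ∈ s, ∑ c ∈ s, 2 / ((x a + x b) * (x b + x c) * (x c + x a)) := by
    simp only [mul_sum, mul_one_div]
  rw [htwo, hpointwise, sum_pow_three]
  simp only [sum_sub_distrib, hrot₁, hrot₂]
  ring

end

theorem triple_sum_decomposition_general (k : ℕ) :
    ∑ m₁ ∈ Finset.Icc 1 k, ∑ m₂ ∈ Finset.Icc 1 k, ∑ m₃ ∈ Finset.Icc 1 k,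
        (1 : ℝ) / ((m₁ + m₂) * (m₂ + m₃) * (m₃ + m₁))
      = (1 / 2) * (∑ m ∈ Finset.Icc 1 k, (1 : ℝ) / m) ^ 3
        - (3 / 2) * ∑ m₁ ∈ Finset.Icc 1 k, ∑ m₂ ∈ Finset.Icc 1 k, ∑ m₃ ∈ Finset.Icc 1 k,
            (1 : ℝ) / (m₂ * (m₁ + m₂) * (m₂ + m₃)) := by
  have hpos : ∀ m ∈ Icc 1 k, (0 : ℝ) < m := fun m hm =>
    Nat.cast_pos.mpr (mem_Icc.mp hm).1
  have h := two_mul_sum_one_div_mul_add_mul_add (Icc 1 k) (fun m : ℕ => (m : ℝ))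
    (fun i hi => (hpos i hi).ne') (fun i hi j hj => (add_pos (hpos i hi) (hpos j hj)).ne')
  linarith

theorem triple_sum_decomposition (k : ℕ) (hk : 1 ≤ k) :
    ∑ m₁ ∈ Finset.Icc 1 k, ∑ m₂ ∈ Finset.Icc 1 k, ∑ m₃ ∈ Finset.Icc 1 k,
        (1 : ℝ) / ((m₁ + m₂) * (m₂ + m₃) * (m₃ + m₁))
      = (1 / 2) * (∑ m ∈ Finset.Icc 1 k, (1 : ℝ) / m) ^ 3
        - (3 / 2) * ∑ m₁ ∈ Finset.Icc 1 k, ∑ m₂ ∈ Finset.Icc 1 k, ∑ m₃ ∈ Finset.Icc 1 k,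
            (1 : ℝ) / (m₂ * (m₁ + m₂) * (m₂ + m₃)) :=
  triple_sum_decomposition_general k
end

section
/- For every integer k ≥ 1, the triple integral over [1, k+1]³ of 1/((x+y)(y+z)(z+x)) equals (1/2)·(log(k+1))³ − (3/2)·∫₁^{k+1} (log((k+1+y)/(1+y)))²·dy/y. -/
/-!
Partial fractions give the symmetrization identity
`2 / ((x+y)(y+z)(z+x)) = 1/(xyz) - Σ 1/(t(t+u)(t+v))`, the sum running over the three choices
of the variable `t` among `x, y, z` (with `u, v` the other two). Over the cube `[a,b]³` the first
term integrates to `log (b/a) ^ 3`. By Fubini each summand may be integrated with `t` outermost,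
and since `∫ u in a..b, 1/(t+u) = log ((b+t)/(a+t))`, each contributes
`∫ t in a..b, log ((b+t)/(a+t)) ^ 2 / t`.
-/

open MeasureTheory Real Set

section Fubini

variable {a b c d : ℝ} {h : ℝ → ℝ → ℝ}

theorem integrable_prod_restrict_Ioc_of_continuousOn
    (hh : ContinuousOn (Function.uncurry h) (Icc a b ×ˢ Icc c d)) :
    Integrable (Function.uncurry h)
      ((volume.restrict (Ioc a b)).prod (volume.restrict (Ioc c d))) := by
  rw [Measure.prod_restrict]
  exact (hh.integrableOn_compact (isCompact_Icc.prod isCompact_Icc)).mono_set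
    (prod_mono Ioc_subset_Icc_self Ioc_subset_Icc_self)

theorem intervalIntegral_integral_swap_of_continuousOn (hab : a ≤ b) (hcd : c ≤ d)
    (hh : ContinuousOn (Function.uncurry h) (Icc a b ×ˢ Icc c d)) :
    ∫ x in a..b, ∫ y in c..d, h x y = ∫ y in c..d, ∫ x in a..b, h x y := by
  simp only [intervalIntegral.integral_of_le hab, intervalIntegral.integral_of_le hcd]
  exact integral_integral_swap (integrable_prod_restrict_Ioc_of_continuousOn hh)

theorem intervalIntegrable_intervalIntegral_of_continuousOn (hab : a ≤ b) (hcd : c ≤ d)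
    (hh : ContinuousOn (Function.uncurry h) (Icc a b ×ˢ Icc c d)) :
    IntervalIntegrable (fun x => ∫ y in c..d, h x y) volume a b := by
  rw [intervalIntegrable_iff_integrableOn_Ioc_of_le hab]
  simp only [intervalIntegral.integral_of_le hcd]
  exact (integrable_prod_restrict_Ioc_of_continuousOn hh).integral_prod_left

end Fubini

theorem integral_inv_add {a b c : ℝ} (ha : 0 < a + c) (hb : 0 < b + c) :
    ∫ t in a..b, (t + c)⁻¹ = log ((b + c) / (a + c)) := by
  rw [intervalIntegral.integral_comp_add_right (fun t => t⁻¹), integral_inv_of_pos ha hb]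

section Cube

variable {a b x : ℝ}

theorem uIcc_subset_Ioi_zero (ha : 0 < a) (hab : a ≤ b) : uIcc a b ⊆ Ioi 0 := by
  rw [uIcc_of_le hab]
  exact (Icc_subset_Ioi_iff hab).2 ha

theorem Icc_prod_Icc_subset_Ioi_zero (ha : 0 < a) (hab : a ≤ b) :
    Icc a b ×ˢ Icc a b ⊆ Ioi 0 ×ˢ Ioi 0 :=
  prod_mono ((Icc_subset_Ioi_iff hab).2 ha) ((Icc_subset_Ioi_iff hab).2 ha)

theorem intervalIntegrable_of_continuousOn_Ioi_zero {f : ℝ → ℝ} (ha : 0 < a) (hab : a ≤ b)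
    (hf : ContinuousOn f (Ioi 0)) : IntervalIntegrable f volume a b :=
  (hf.mono (uIcc_subset_Ioi_zero ha hab)).intervalIntegrable

theorem integral_one_div_pairwise_sums {y : ℝ} (ha : 0 < a) (hab : a ≤ b) (hx : 0 < x)
    (hy : 0 < y) :
    ∫ z in a..b, 1 / ((x + y) * (y + z) * (z + x))
      = (log (b / a) / x * y⁻¹ - log ((b + x) / (a + x)) / x * (y + x)⁻¹
          - log ((b + y) / (a + y)) / (y * (y + x))
          - ∫ z in a..b, 1 / (z * (z + x) * (z + y))) / 2 := by
  have iA : IntervalIntegrable (fun z => (x * y)⁻¹ * z⁻¹) volume a b :=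
    intervalIntegrable_of_continuousOn_Ioi_zero ha hab
      (by fun_prop (disch := intro t ht; rw [mem_Ioi] at ht; positivity))
  have iB : IntervalIntegrable (fun z => (x * (x + y))⁻¹ * (z + x)⁻¹) volume a b :=
    intervalIntegrable_of_continuousOn_Ioi_zero ha hab
      (by fun_prop (disch := intro t ht; rw [mem_Ioi] at ht; positivity))
  have iC : IntervalIntegrable (fun z => (y * (x + y))⁻¹ * (z + y)⁻¹) volume a b :=
    intervalIntegrable_of_continuousOn_Ioi_zero ha hab
      (by fun_prop (disch := intro t ht; rw [mem_Ioi] at ht; positivity))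
  have iK : IntervalIntegrable (fun z => 1 / (z * (z + x) * (z + y))) volume a b :=
    intervalIntegrable_of_continuousOn_Ioi_zero ha hab
      (by fun_prop (disch := intro t ht; rw [mem_Ioi] at ht; positivity))
  have partial_fractions : ∀ z ∈ uIcc a b, 1 / ((x + y) * (y + z) * (z + x))
      = ((x * y)⁻¹ * z⁻¹ - (x * (x + y))⁻¹ * (z + x)⁻¹ - (y * (x + y))⁻¹ * (z + y)⁻¹
          - 1 / (z * (z + x) * (z + y))) / 2 := by
    intro z hz
    have : 0 < z := uIcc_subset_Ioi_zero ha hab hz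
    field_simp
    ring
  rw [intervalIntegral.integral_congr partial_fractions, intervalIntegral.integral_div,
    intervalIntegral.integral_sub ((iA.sub iB).sub iC) iK,
    intervalIntegral.integral_sub (iA.sub iB) iC, intervalIntegral.integral_sub iA iB,
    intervalIntegral.integral_const_mul, intervalIntegral.integral_const_mul,
    intervalIntegral.integral_const_mul, integral_inv_of_pos ha (ha.trans_le hab),
    integral_inv_add (by positivity) (by linarith), integral_inv_add (by positivity) (by linarith)]
  field_simp
  ring

theorem integral_integral_one_div_mul_add_mul_add (ha : 0 < a) (hab : a ≤ b) (hx : 0 < x) :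
    ∫ y in a..b, ∫ z in a..b, 1 / (z * (z + x) * (z + y))
      = ∫ y in a..b, log ((b + y) / (a + y)) / (y * (y + x)) := by
  have hcont : ContinuousOn (Function.uncurry fun y z : ℝ => 1 / (z * (z + x) * (z + y)))
      (Ioi 0 ×ˢ Ioi 0) := by
    fun_prop (disch := rintro ⟨s, t⟩ ⟨hs, ht⟩; rw [mem_Ioi] at hs ht; positivity)
  rw [intervalIntegral_integral_swap_of_continuousOn hab hab
    (hcont.mono (Icc_prod_Icc_subset_Ioi_zero ha hab))]
  refine intervalIntegral.integral_congr fun z hz => ?_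
  have hz : 0 < z := uIcc_subset_Ioi_zero ha hab hz
  calc ∫ y in a..b, 1 / (z * (z + x) * (z + y))
      = ∫ y in a..b, (z * (z + x))⁻¹ * (y + z)⁻¹ := by
        simp only [one_div, mul_inv, add_comm z]
    _ = log ((b + z) / (a + z)) / (z * (z + x)) := by
        rw [intervalIntegral.integral_const_mul, integral_inv_add (by positivity) (by linarith),
          inv_mul_eq_div]

theorem integral_integral_log_div_mul_add (ha : 0 < a) (hab : a ≤ b) :
    ∫ x in a..b, ∫ y in a..b, log ((b + y) / (a + y)) / (y * (y + x))
      = ∫ y in a..b, log ((b + y) / (a + y)) ^ 2 / y := by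
  have hb : 0 < b := ha.trans_le hab
  have hcont : ContinuousOn
      (Function.uncurry fun x y : ℝ => log ((b + y) / (a + y)) / (y * (y + x)))
      (Ioi 0 ×ˢ Ioi 0) := by
    fun_prop (disch := rintro ⟨s, t⟩ ⟨hs, ht⟩; rw [mem_Ioi] at hs ht; positivity)
  rw [intervalIntegral_integral_swap_of_continuousOn hab hab
    (hcont.mono (Icc_prod_Icc_subset_Ioi_zero ha hab))]
  refine intervalIntegral.integral_congr fun y hy => ?_
  have hy : 0 < y := uIcc_subset_Ioi_zero ha hab hy
  calc ∫ x in a..b, log ((b + y) / (a + y)) / (y * (y + x))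
      = ∫ x in a..b, (log ((b + y) / (a + y)) / y) * (x + y)⁻¹ := by
        simp only [div_eq_mul_inv, mul_inv, add_comm y, mul_assoc]
    _ = log ((b + y) / (a + y)) ^ 2 / y := by
        rw [intervalIntegral.integral_const_mul, integral_inv_add (by positivity) (by linarith)]
        ring

theorem integral_integral_one_div_pairwise_sums (ha : 0 < a) (hab : a ≤ b) (hx : 0 < x) :
    ∫ y in a..b, ∫ z in a..b, 1 / ((x + y) * (y + z) * (z + x))
      = (log (b / a) ^ 2 * x⁻¹ - log ((b + x) / (a + x)) ^ 2 / x
          - 2 * ∫ y in a..b, log ((b + y) / (a + y)) / (y * (y + x))) / 2 := by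
  have hb : 0 < b := ha.trans_le hab
  have iA : IntervalIntegrable (fun y => log (b / a) / x * y⁻¹) volume a b :=
    intervalIntegrable_of_continuousOn_Ioi_zero ha hab
      (by fun_prop (disch := intro t ht; rw [mem_Ioi] at ht; positivity))
  have iB : IntervalIntegrable (fun y => log ((b + x) / (a + x)) / x * (y + x)⁻¹) volume a b :=
    intervalIntegrable_of_continuousOn_Ioi_zero ha hab
      (by fun_prop (disch := intro t ht; rw [mem_Ioi] at ht; positivity))
  have iC : IntervalIntegrable (fun y => log ((b + y) / (a + y)) / (y * (y + x))) volume a b :=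
    intervalIntegrable_of_continuousOn_Ioi_zero ha hab
      (by fun_prop (disch := intro t ht; rw [mem_Ioi] at ht; positivity))
  have iK : IntervalIntegrable
      (fun y => ∫ z in a..b, 1 / (z * (z + x) * (z + y))) volume a b := by
    refine intervalIntegrable_intervalIntegral_of_continuousOn hab hab (ContinuousOn.mono ?_
      (Icc_prod_Icc_subset_Ioi_zero ha hab))
    fun_prop (disch := rintro ⟨s, t⟩ ⟨hs, ht⟩; rw [mem_Ioi] at hs ht; positivity)
  rw [intervalIntegral.integral_congr fun y hy =>
      integral_one_div_pairwise_sums ha hab hx (uIcc_subset_Ioi_zero ha hab hy),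
    intervalIntegral.integral_div, intervalIntegral.integral_sub ((iA.sub iB).sub iC) iK,
    intervalIntegral.integral_sub (iA.sub iB) iC, intervalIntegral.integral_sub iA iB,
    intervalIntegral.integral_const_mul, intervalIntegral.integral_const_mul,
    integral_inv_of_pos ha hb, integral_inv_add (by positivity) (by linarith),
    integral_integral_one_div_mul_add_mul_add ha hab hx]
  ring

theorem integral_integral_integral_one_div_pairwise_sums (ha : 0 < a) (hab : a ≤ b) :
    ∫ x in a..b, ∫ y in a..b, ∫ z in a..b, 1 / ((x + y) * (y + z) * (z + x))
      = log (b / a) ^ 3 / 2 - 3 / 2 * ∫ y in a..b, log ((b + y) / (a + y)) ^ 2 / y := by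
  have hb : 0 < b := ha.trans_le hab
  have iA : IntervalIntegrable (fun x => log (b / a) ^ 2 * x⁻¹) volume a b :=
    intervalIntegrable_of_continuousOn_Ioi_zero ha hab
      (by fun_prop (disch := intro t ht; rw [mem_Ioi] at ht; positivity))
  have iB : IntervalIntegrable (fun x => log ((b + x) / (a + x)) ^ 2 / x) volume a b :=
    intervalIntegrable_of_continuousOn_Ioi_zero ha hab
      (by fun_prop (disch := intro t ht; rw [mem_Ioi] at ht; positivity))
  have iJ : IntervalIntegrable
      (fun x => ∫ y in a..b, log ((b + y) / (a + y)) / (y * (y + x))) volume a b := by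
    refine intervalIntegrable_intervalIntegral_of_continuousOn hab hab (ContinuousOn.mono ?_
      (Icc_prod_Icc_subset_Ioi_zero ha hab))
    fun_prop (disch := rintro ⟨s, t⟩ ⟨hs, ht⟩; rw [mem_Ioi] at hs ht; positivity)
  rw [intervalIntegral.integral_congr fun x hx =>
      integral_integral_one_div_pairwise_sums ha hab (uIcc_subset_Ioi_zero ha hab hx),
    intervalIntegral.integral_div, intervalIntegral.integral_sub (iA.sub iB) (iJ.const_mul 2),
    intervalIntegral.integral_sub iA iB, intervalIntegral.integral_const_mul,
    intervalIntegral.integral_const_mul, integral_inv_of_pos ha hb,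
    integral_integral_log_div_mul_add ha hab]
  ring

end Cube

theorem triple_integral_reduction_general (k : ℕ) :
    ∫ x in (1:ℝ)..(k + 1), ∫ y in (1:ℝ)..(k + 1), ∫ z in (1:ℝ)..(k + 1),
        1 / ((x + y) * (y + z) * (z + x))
      = (1 / 2) * (Real.log ((k : ℝ) + 1)) ^ 3
        - (3 / 2) * ∫ y in (1:ℝ)..(k + 1),
            (Real.log (((k : ℝ) + 1 + y) / (1 + y))) ^ 2 / y := by
  rw [integral_integral_integral_one_div_pairwise_sums one_pos (by simp), div_one]
  ring

theorem triple_integral_reduction (k : ℕ) (hk : 1 ≤ k) :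
    ∫ x in (1:ℝ)..(k + 1), ∫ y in (1:ℝ)..(k + 1), ∫ z in (1:ℝ)..(k + 1),
        1 / ((x + y) * (y + z) * (z + x))
      = (1 / 2) * (Real.log ((k : ℝ) + 1)) ^ 3
        - (3 / 2) * ∫ y in (1:ℝ)..(k + 1),
            (Real.log (((k : ℝ) + 1 + y) / (1 + y))) ^ 2 / y :=
  triple_integral_reduction_general k
end
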